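/- arXiv:2201.12874 — 4 statements merged into one kernel-verified Lean document; each statement's English description precedes it below -/
import Mathlib

section
/- Let A, A' ∈ ℝ^{n×n} be symmetric matrices with A positive semidefinite, and let ε > 0. If (1 − ε)A ⪯ A' ⪯ (1 + ε)A in the Loewner order (i.e. A' − (1−ε)A and (1+ε)A − A' are positive semidefinite), then for every p ∈ [1, ∞], ‖A' − A‖_{S_p} ≤ ε‖A‖_{S_p}. -/
open scoped BigOperators ENNReal
open Matrix

/-- Number of nonzero entries of a vector. -/
noncomputable def nnzv {n : ℕ} (x : Fin n → ℝ) : ℕ :=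
  (Finset.univ.filter fun i => x i ≠ 0).card

/-- The ℓ_p norm of a vector, for a real exponent `p`. -/
noncomputable def lpNorm {n : ℕ} (p : ℝ) (x : Fin n → ℝ) : ℝ :=
  (∑ i, |x i| ^ p) ^ (1 / p)

/-- `IsHead x c y` : `y` is obtained from `x` by keeping (at most) `c` entries that are
largest in absolute value (exactly `min c n` of them, ties broken arbitrarily) and zeroing out the rest. -/
def IsHead {n : ℕ} (x : Fin n → ℝ) (c : ℕ) (y : Fin n → ℝ) : Prop :=
  ∃ T : Finset (Fin n), T.card = min c n ∧ (∀ i ∈ T, y i = x i) ∧ (∀ i ∉ T, y i = 0) ∧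
    ∀ i ∈ T, ∀ j ∉ T, |x j| ≤ |x i|

/-- The singular values of a real matrix: square roots of the eigenvalues of `Aᵀ * A`. -/
noncomputable def singVals {m n : Type*} [Fintype m] [Fintype n] [DecidableEq n]
    (A : Matrix m n ℝ) : n → ℝ :=
  fun j => Real.sqrt ((Matrix.isHermitian_conjTranspose_mul_self A).eigenvalues j)

/-- The Schatten p-(quasi)norm of a real matrix, for a real exponent `p > 0`. -/
noncomputable def schattenF {m n : Type*} [Fintype m] [Fintype n] [DecidableEq n]
    (p : ℝ) (A : Matrix m n ℝ) : ℝ :=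
  (∑ j, singVals A j ^ p) ^ (1 / p)

/-- The spectral norm (Schatten ∞-norm): the largest singular value. -/
noncomputable def specNorm {m n : Type*} [Fintype m] [Fintype n] [DecidableEq n]
    (A : Matrix m n ℝ) : ℝ :=
  ⨆ j, singVals A j

open Classical in
/-- The Schatten p-norm with exponent `p ∈ (0,∞]`. -/
noncomputable def schattenE {m n : Type*} [Fintype m] [Fintype n] [DecidableEq n]
    (p : ℝ≥0∞) (A : Matrix m n ℝ) : ℝ :=
  if p = ⊤ then specNorm A else schattenF p.toReal A

/-- Number of nonzero entries of a matrix. -/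
noncomputable def nnz {m n : Type*} [Fintype m] [Fintype n] (A : Matrix m n ℝ) : ℕ :=
  (Finset.univ.filter fun ij : m × n => A ij.1 ij.2 ≠ 0).card

/-!
Write `E = A' - A`. The hypothesis says `|xᵀ E x| ≤ ε xᵀ A x` for every `x`. Testing it on a
unit eigenvector `uᵢ` of `E` gives `|ηᵢ| ≤ ε ∑ⱼ ⟪uᵢ, vⱼ⟫² βⱼ`, where `(vⱼ, βⱼ)` are the
eigenpairs of `A`. The overlap matrix `(⟪uᵢ, vⱼ⟫²)` of two orthonormal bases is doubly
stochastic, so `|η|` is dominated entrywise by a doubly stochastic average of `εβ`; by Jensen's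
inequality for `t ↦ tᵖ` this gives `∑ |ηᵢ|ᵖ ≤ εᵖ ∑ βⱼᵖ`, and trivially `max |ηᵢ| ≤ ε max βⱼ`.
Since both matrices are symmetric, their singular values are the absolute values of their
eigenvalues, so these are exactly the claimed Schatten-norm bounds.
-/

open scoped InnerProductSpace

namespace Matrix.IsHermitian

variable {n : Type*} [Fintype n] [DecidableEq n] {M : Matrix n n ℝ}

open Polynomial in
theorem charpoly_conjTranspose_mul_self (hM : M.IsHermitian) :
    (Mᴴ * M).charpoly = ∏ i, (X - C (hM.eigenvalues i ^ 2)) := by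
  rw [hM.eq]
  conv_lhs => rw [hM.spectral_theorem, ← map_mul, Unitary.conjStarAlgAut_apply,
    charpoly_mul_comm, ← mul_assoc]
  simp [charpoly_diagonal, sq]

theorem map_singVals (hM : M.IsHermitian) :
    Finset.univ.val.map (singVals M) = Finset.univ.val.map fun i => |hM.eigenvalues i| := by
  have h := (isHermitian_conjTranspose_mul_self M).roots_charpoly_eq_eigenvalues
  have hprod : ∏ i, (Polynomial.X - Polynomial.C (hM.eigenvalues i ^ 2)) =
      ((Finset.univ.val.map fun i => hM.eigenvalues i ^ 2).map
        fun a => Polynomial.X - Polynomial.C a).prod := by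
    rw [Multiset.map_map]; rfl
  rw [hM.charpoly_conjTranspose_mul_self, hprod, Polynomial.roots_multiset_prod_X_sub_C] at h
  have := congrArg (Multiset.map Real.sqrt) h
  simp only [Multiset.map_map, Function.comp_def, RCLike.ofReal_real_eq_id, id,
    Real.sqrt_sq_eq_abs] at this
  exact this.symm

theorem sum_comp_singVals (hM : M.IsHermitian) (g : ℝ → ℝ) :
    ∑ j, g (singVals M j) = ∑ i, g |hM.eigenvalues i| :=
  calc ∑ j, g (singVals M j) = ((Finset.univ.val.map (singVals M)).map g).sum := by
        rw [Multiset.map_map]; rfl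
    _ = ∑ i, g |hM.eigenvalues i| := by rw [hM.map_singVals, Multiset.map_map]; rfl

theorem range_singVals (hM : M.IsHermitian) :
    Set.range (singVals M) = Set.range fun i => |hM.eigenvalues i| := by
  ext x
  simpa using congrArg (x ∈ ·) hM.map_singVals

theorem schattenF_eq (hM : M.IsHermitian) (p : ℝ) :
    schattenF p M = (∑ i, |hM.eigenvalues i| ^ p) ^ (1 / p) := by
  rw [schattenF, hM.sum_comp_singVals (· ^ p)]

theorem specNorm_eq (hM : M.IsHermitian) : specNorm M = ⨆ i, |hM.eigenvalues i| := by
  rw [specNorm, iSup, hM.range_singVals, iSup]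

end Matrix.IsHermitian

theorem OrthonormalBasis.inner_sq_mem_doublyStochastic {n E : Type*} [Fintype n] [DecidableEq n]
    [NormedAddCommGroup E] [InnerProductSpace ℝ E] (u v : OrthonormalBasis n ℝ E) :
    Matrix.of (fun i j => ⟪u i, v j⟫_ℝ ^ 2) ∈ doublyStochastic ℝ n := by
  refine mem_doublyStochastic_iff_sum.2 ⟨fun i j => sq_nonneg _, fun i => ?_, fun j => ?_⟩
  · simpa [sq, real_inner_comm (v _)] using v.sum_inner_mul_inner (u i) (u i)
  · simpa [sq, real_inner_comm (v j)] using u.sum_inner_mul_inner (v j) (v j)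

namespace Matrix

theorem dotProduct_mulVec_eq_sum_of_orthonormalBasis {n : Type*} [Fintype n] {B : Matrix n n ℝ}
    (v : OrthonormalBasis n ℝ (EuclideanSpace ℝ n)) {β : n → ℝ}
    (hv : ∀ j, B *ᵥ ⇑(v j) = β j • ⇑(v j)) (x : EuclideanSpace ℝ n) :
    ⇑x ⬝ᵥ B *ᵥ ⇑x = ∑ j, ⟪x, v j⟫_ℝ ^ 2 * β j := by
  have hBx : B *ᵥ ⇑x = ∑ j, (⟪v j, x⟫_ℝ * β j) • ⇑(v j) := by
    conv_lhs => rw [← v.sum_repr' x]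
    simp [mulVec_sum, mulVec_smul, hv, smul_smul]
  simp only [hBx, dotProduct_sum, dotProduct_smul, smul_eq_mul]
  refine Finset.sum_congr rfl fun j _ => ?_
  rw [← star_trivial (v j).ofLp, ← EuclideanSpace.inner_eq_star_dotProduct, real_inner_comm x]
  ring

theorem abs_dotProduct_mulVec_sub_le {n : Type*} [Fintype n] {A A' : Matrix n n ℝ} {ε : ℝ}
    (h1 : (A' - (1 - ε) • A).PosSemidef) (h2 : ((1 + ε) • A - A').PosSemidef) (x : n → ℝ) :
    |x ⬝ᵥ (A' - A) *ᵥ x| ≤ ε * (x ⬝ᵥ A *ᵥ x) := by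
  have lower := h1.dotProduct_mulVec_nonneg x
  have upper := h2.dotProduct_mulVec_nonneg x
  simp only [sub_mulVec, smul_mulVec, dotProduct_sub, dotProduct_smul, smul_eq_mul,
    star_trivial] at lower upper ⊢
  rw [abs_le]
  constructor <;> linarith

variable {n : Type*} [Fintype n] [DecidableEq n]

theorem mulVec_le_iSup_of_mem_rowStochastic {S : Matrix n n ℝ} (hS : S ∈ rowStochastic ℝ n)
    (b : n → ℝ) (i : n) : (S *ᵥ b) i ≤ ⨆ j, b j :=
  calc (S *ᵥ b) i = ∑ j, S i j * b j := rfl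
    _ ≤ ∑ j, S i j * ⨆ j, b j := by
      gcongr with j
      · exact nonneg_of_mem_rowStochastic hS
      · exact le_ciSup (Set.finite_range b).bddAbove j
    _ = ⨆ j, b j := by rw [← Finset.sum_mul, sum_row_of_mem_rowStochastic hS, one_mul]

theorem sum_mulVec_rpow_le_of_mem_doublyStochastic {S : Matrix n n ℝ}
    (hS : S ∈ doublyStochastic ℝ n) {b : n → ℝ} (hb : ∀ j, 0 ≤ b j) {q : ℝ} (hq : 1 ≤ q) :
    ∑ i, (S *ᵥ b) i ^ q ≤ ∑ j, b j ^ q :=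
  calc ∑ i, (S *ᵥ b) i ^ q ≤ ∑ i, (S *ᵥ fun j => b j ^ q) i := by
        gcongr with i
        exact Real.rpow_arith_mean_le_arith_mean_rpow _ _ _
          (fun j _ => nonneg_of_mem_doublyStochastic hS) (sum_row_of_mem_doublyStochastic hS i)
          (fun j _ => hb j) hq
    _ = ∑ j, b j ^ q := sum_mulVec_of_mem_doublyStochastic hS

variable {E A : Matrix n n ℝ}

theorem IsHermitian.abs_eigenvalues_le_mulVec {B : Matrix n n ℝ} (hE : E.IsHermitian)
    (v : OrthonormalBasis n ℝ (EuclideanSpace ℝ n)) {β : n → ℝ}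
    (hv : ∀ j, B *ᵥ ⇑(v j) = β j • ⇑(v j)) (h : ∀ x, |x ⬝ᵥ E *ᵥ x| ≤ x ⬝ᵥ B *ᵥ x) (i : n) :
    |hE.eigenvalues i| ≤ (of (fun i j => ⟪hE.eigenvectorBasis i, v j⟫_ℝ ^ 2) *ᵥ β) i := by
  have := h (hE.eigenvectorBasis i)
  rw [dotProduct_mulVec_eq_sum_of_orthonormalBasis v hv] at this
  simpa [hE.eigenvalues_eq i, mulVec, dotProduct] using this

theorem specNorm_le_of_abs_eigenvalues_le_mulVec (hE : E.IsHermitian) (hA : A.PosSemidef)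
    {S : Matrix n n ℝ} (hS : S ∈ rowStochastic ℝ n) {ε : ℝ} (hε : 0 ≤ ε)
    (hdom : ∀ i, |hE.eigenvalues i| ≤ (S *ᵥ ε • hA.1.eigenvalues) i) :
    specNorm E ≤ ε * specNorm A := by
  rw [hE.specNorm_eq, hA.1.specNorm_eq, Real.mul_iSup_of_nonneg hε]
  refine Real.iSup_le (fun i => (hdom i).trans ?_) ?_
  · simpa [abs_of_nonneg (hA.eigenvalues_nonneg _)] using
      mulVec_le_iSup_of_mem_rowStochastic hS (ε • hA.1.eigenvalues) i
  · exact Real.iSup_nonneg fun j => by positivity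

theorem schattenF_le_of_abs_eigenvalues_le_mulVec (hE : E.IsHermitian) (hA : A.PosSemidef)
    {S : Matrix n n ℝ} (hS : S ∈ doublyStochastic ℝ n) {ε : ℝ} (hε : 0 ≤ ε)
    (hdom : ∀ i, |hE.eigenvalues i| ≤ (S *ᵥ ε • hA.1.eigenvalues) i) {q : ℝ} (hq : 1 ≤ q) :
    schattenF q E ≤ ε * schattenF q A := by
  have hβ : ∀ j, 0 ≤ hA.1.eigenvalues j := hA.eigenvalues_nonneg
  have hsum : ∑ i, |hE.eigenvalues i| ^ q ≤ ∑ j, (ε • hA.1.eigenvalues) j ^ q :=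
    calc ∑ i, |hE.eigenvalues i| ^ q ≤ ∑ i, (S *ᵥ ε • hA.1.eigenvalues) i ^ q := by
          gcongr with i; exact hdom i
      _ ≤ _ := sum_mulVec_rpow_le_of_mem_doublyStochastic hS
          (fun j => mul_nonneg hε (hβ j)) hq
  rw [hE.schattenF_eq, hA.1.schattenF_eq]
  calc (∑ i, |hE.eigenvalues i| ^ q) ^ (1 / q)
      ≤ (∑ j, (ε • hA.1.eigenvalues) j ^ q) ^ (1 / q) := by gcongr
    _ = (ε ^ q * ∑ j, |hA.1.eigenvalues j| ^ q) ^ (1 / q) := by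
      simp only [Finset.mul_sum, Pi.smul_apply, smul_eq_mul, Real.mul_rpow hε (hβ _),
        abs_of_nonneg (hβ _)]
    _ = ε * (∑ j, |hA.1.eigenvalues j| ^ q) ^ (1 / q) := by
      rw [Real.mul_rpow (by positivity) (by positivity), ← Real.rpow_mul hε,
        mul_one_div_cancel (by positivity), Real.rpow_one]

theorem schattenE_le_of_abs_dotProduct_mulVec_le (hE : E.IsHermitian) (hA : A.PosSemidef)
    {ε : ℝ} (hε : 0 ≤ ε) (h : ∀ x, |x ⬝ᵥ E *ᵥ x| ≤ ε * (x ⬝ᵥ A *ᵥ x)) {p : ℝ≥0∞} (hp : 1 ≤ p) :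
    schattenE p E ≤ ε * schattenE p A := by
  have hS := hE.eigenvectorBasis.inner_sq_mem_doublyStochastic hA.1.eigenvectorBasis
  have hdom := hE.abs_eigenvalues_le_mulVec hA.1.eigenvectorBasis (B := ε • A)
    (fun j => by rw [smul_mulVec, hA.1.mulVec_eigenvectorBasis, smul_smul])
    (fun x => by simpa only [smul_mulVec, dotProduct_smul, smul_eq_mul] using h x)
  rw [schattenE, schattenE]
  split_ifs with hp_top
  · exact specNorm_le_of_abs_eigenvalues_le_mulVec hE hA
      (mem_doublyStochastic_iff_mem_rowStochastic_and_mem_colStochastic.1 hS).1 hε hdom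
  · exact schattenF_le_of_abs_eigenvalues_le_mulVec hE hA hS hε hdom
      (by simpa using ENNReal.toReal_mono hp_top hp)

end Matrix

theorem stmt3_general (n : ℕ) (A A' : Matrix (Fin n) (Fin n) ℝ)
    (hA : A.PosSemidef) (ε : ℝ) (hε : 0 < ε)
    (h1 : (A' - (1 - ε) • A).PosSemidef) (h2 : ((1 + ε) • A - A').PosSemidef) :
    ∀ p : ℝ≥0∞, 1 ≤ p → schattenE p (A' - A) ≤ ε * schattenE p A := by
  have hE : (A' - A).IsHermitian := by
    have : A' - A = (A' - (1 - ε) • A) - ε • A := by module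
    exact this ▸ h1.1.sub (hA.1.smul (IsSelfAdjoint.all ε))
  exact fun p hp => schattenE_le_of_abs_dotProduct_mulVec_le hE hA hε.le
    (abs_dotProduct_mulVec_sub_le h1 h2) hp

/-- an `ε`-spectral approximation of a PSD matrix is an `(ε, S_p)`-norm
approximation simultaneously for all `p ∈ [1, ∞]`. -/
theorem stmt3 (n : ℕ) (A A' : Matrix (Fin n) (Fin n) ℝ)
    (hA : A.PosSemidef) (hAs : A.IsSymm) (hA's : A'.IsSymm) (ε : ℝ) (hε : 0 < ε)
    (h1 : (A' - (1 - ε) • A).PosSemidef) (h2 : ((1 + ε) • A - A').PosSemidef) :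
    ∀ p : ℝ≥0∞, 1 ≤ p → schattenE p (A' - A) ≤ ε * schattenE p A :=
  stmt3_general n A A' hA ε hε h1 h2
end

section
/- For every a ∈ ℝⁿ, every 1 ≤ p < q ≤ ∞, and every integer 0 < c < n: ‖a_tail(c)‖_q ≤ c^{−(1/p − 1/q)}‖a‖_p, with the convention 1/∞ = 0. -/
/-!
Each tail entry `t i` is dominated in absolute value by all `c` head entries, so
`c * |t i| ^ p ≤ ‖a‖_p ^ p`, i.e. `‖t‖_∞ ≤ (‖a‖_p ^ p / c) ^ (1/p) = c ^ (-1/p) * ‖a‖_p`.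
For finite `q > p` interpolate: `∑ |t i| ^ q ≤ ‖t‖_∞ ^ (q - p) * ∑ |t i| ^ p`, and
`∑ |t i| ^ p ≤ ‖a‖_p ^ p`.
-/

open scoped BigOperators ENNReal
open Matrix

/-- The `ℓ_q` norm of a vector for `q ∈ (0, ∞]`. -/
noncomputable def lqNormE {n : ℕ} (q : ℝ≥0∞) (x : Fin n → ℝ) : ℝ :=
  if q = ⊤ then ⨆ i, |x i| else lpNorm q.toReal x

namespace Real

lemma abs_le_div_rpow_of_mul_rpow_le {x c S p : ℝ} (hp : 0 < p) (hc : 0 < c)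
    (h : c * |x| ^ p ≤ S) : |x| ≤ (S / c) ^ (1 / p) := by
  have hS : 0 ≤ S := (mul_nonneg hc.le (rpow_nonneg (abs_nonneg x) p)).trans h
  rw [one_div, le_rpow_inv_iff_of_pos (abs_nonneg x) (div_nonneg hS hc.le) hp, le_div_iff₀' hc]
  exact h

lemma iSup_abs_le_of_mul_rpow_le {ι : Sort*} {z : ι → ℝ} {S c p : ℝ} (hp : 0 < p) (hc : 0 < c)
    (hS : 0 ≤ S) (hmax : ∀ i, c * |z i| ^ p ≤ S) :
    ⨆ i, |z i| ≤ c ^ (-(1 / p)) * S ^ (1 / p) := by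
  rw [rpow_neg hc.le, ← div_eq_inv_mul, ← div_rpow hS hc.le]
  exact Real.iSup_le (fun i => abs_le_div_rpow_of_mul_rpow_le hp hc (hmax i)) (by positivity)

variable {ι : Type*} [Fintype ι]

lemma sum_abs_rpow_le_mul_sum_abs_rpow {z : ι → ℝ} {M p r : ℝ} (hp : 0 < p) (hpr : p ≤ r)
    (hz : ∀ i, |z i| ≤ M) : ∑ i, |z i| ^ r ≤ M ^ (r - p) * ∑ i, |z i| ^ p := by
  rw [Finset.mul_sum]
  refine Finset.sum_le_sum fun i _ => ?_
  calc |z i| ^ r = |z i| ^ (r - p) * |z i| ^ p := by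
        rw [← rpow_add' (abs_nonneg _) (by linarith), sub_add_cancel]
    _ ≤ M ^ (r - p) * |z i| ^ p :=
        mul_le_mul_of_nonneg_right (rpow_le_rpow (abs_nonneg _) (hz i) (sub_nonneg.2 hpr))
          (rpow_nonneg (abs_nonneg _) _)

lemma div_rpow_one_div_rpow_sub_mul_rpow_one_div {S c p r : ℝ} (hS : 0 ≤ S) (hc : 0 < c)
    (hp : 0 < p) (hr : 0 < r) :
    (((S / c) ^ (1 / p)) ^ (r - p) * S) ^ (1 / r) = c ^ (-(1 / p - 1 / r)) * S ^ (1 / p) := by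
  have hexp : 1 / p * (r - p) + 1 = r / p := by
    field_simp
    ring
  have hSr : S ^ (1 / p * (r - p)) * S = S ^ (r / p) := by
    rw [← rpow_add_one' hS (by rw [hexp]; positivity), hexp]
  calc (((S / c) ^ (1 / p)) ^ (r - p) * S) ^ (1 / r)
      = (S ^ (r / p) / c ^ (1 / p * (r - p))) ^ (1 / r) := by
        rw [← rpow_mul (div_nonneg hS hc.le), div_rpow hS hc.le, div_mul_eq_mul_div, hSr]
    _ = S ^ (1 / p) / c ^ (1 / p * (r - p) * (1 / r)) := by
        rw [div_rpow (rpow_nonneg hS _) (rpow_nonneg hc.le _), ← rpow_mul hS, ← rpow_mul hc.le]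
        congr 2
        field_simp
    _ = c ^ (-(1 / p - 1 / r)) * S ^ (1 / p) := by
        rw [rpow_neg hc.le, div_eq_mul_inv, mul_comm]
        congr 3
        field_simp

lemma sum_abs_rpow_rpow_one_div_le {z : ι → ℝ} {S c p r : ℝ} (hp : 0 < p) (hpr : p ≤ r)
    (hc : 0 < c) (hsum : ∑ i, |z i| ^ p ≤ S) (hmax : ∀ i, c * |z i| ^ p ≤ S) :
    (∑ i, |z i| ^ r) ^ (1 / r) ≤ c ^ (-(1 / p - 1 / r)) * S ^ (1 / p) := by
  have hS : 0 ≤ S := (Finset.sum_nonneg fun i _ => rpow_nonneg (abs_nonneg (z i)) p).trans hsum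
  have hr : 0 < r := hp.trans_le hpr
  calc (∑ i, |z i| ^ r) ^ (1 / r)
      ≤ (((S / c) ^ (1 / p)) ^ (r - p) * S) ^ (1 / r) := by
        refine rpow_le_rpow (Finset.sum_nonneg fun i _ => by positivity) ?_ (by positivity)
        calc ∑ i, |z i| ^ r ≤ ((S / c) ^ (1 / p)) ^ (r - p) * ∑ i, |z i| ^ p :=
              sum_abs_rpow_le_mul_sum_abs_rpow hp hpr
                fun i => abs_le_div_rpow_of_mul_rpow_le hp hc (hmax i)
          _ ≤ ((S / c) ^ (1 / p)) ^ (r - p) * S := by gcongr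
    _ = c ^ (-(1 / p - 1 / r)) * S ^ (1 / p) :=
        div_rpow_one_div_rpow_sub_mul_rpow_one_div hS hc hp hr

end Real

namespace IsHead

variable {n c : ℕ} {a y : Fin n → ℝ}

lemma abs_sub_le (hy : IsHead a c y) (i : Fin n) : |(a - y) i| ≤ |a i| := by
  obtain ⟨T, -, hyT, hyTc, -⟩ := hy
  by_cases hi : i ∈ T
  · simp [hyT i hi]
  · simp [hyTc i hi]

lemma card_mul_abs_sub_rpow_le (hy : IsHead a c y) {p : ℝ} (hp : 0 < p) (i : Fin n) :
    c * |(a - y) i| ^ p ≤ ∑ j, |a j| ^ p := by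
  obtain ⟨T, hTcard, hyT, hyTc, hlarge⟩ := hy
  by_cases hi : i ∈ T
  · simpa [hyT i hi, Real.zero_rpow hp.ne'] using
      Finset.sum_nonneg fun j _ => Real.rpow_nonneg (abs_nonneg (a j)) p
  · have hcard : T.card = c := by
      have := Finset.card_lt_univ_of_notMem hi
      rw [Fintype.card_fin] at this
      omega
    calc (c : ℝ) * |(a - y) i| ^ p = ∑ _j ∈ T, |a i| ^ p := by
          simp [hyTc i hi, hcard]
      _ ≤ ∑ j ∈ T, |a j| ^ p := Finset.sum_le_sum fun j hj =>
          Real.rpow_le_rpow (abs_nonneg _) (hlarge j hj i hi) hp.le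
      _ ≤ ∑ j, |a j| ^ p := Finset.sum_le_sum_of_subset_of_nonneg (Finset.subset_univ T)
          fun j _ _ => Real.rpow_nonneg (abs_nonneg _) _

end IsHead

/-- For `q = ⊤` the exponent reads `-(1 / p - 0)`: `(⊤ : ℝ≥0∞).toReal = 0` and `1 / 0 = 0`
encode the convention `1/∞ = 0`. -/
theorem stmt4_general (n : ℕ) (a : Fin n → ℝ) (p : ℝ) (hp : 1 ≤ p) (q : ℝ≥0∞)
    (hpq : ENNReal.ofReal p < q) (c : ℕ) (hc0 : 0 < c)
    (y : Fin n → ℝ) (hy : IsHead a c y) :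
    lqNormE q (a - y) ≤ (c : ℝ) ^ (-(1 / p - 1 / q.toReal)) * lpNorm p a := by
  have hp0 : 0 < p := by linarith
  have hc : (0 : ℝ) < c := by exact_mod_cast hc0
  have hsum : ∑ i, |(a - y) i| ^ p ≤ ∑ i, |a i| ^ p := Finset.sum_le_sum fun i _ =>
    Real.rpow_le_rpow (abs_nonneg _) (hy.abs_sub_le i) hp0.le
  have hmax := hy.card_mul_abs_sub_rpow_le hp0
  unfold lqNormE lpNorm
  by_cases hq : q = ⊤
  · simp only [hq, if_true, ENNReal.toReal_top, div_zero, sub_zero]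
    exact Real.iSup_abs_le_of_mul_rpow_le hp0 hc
      (Finset.sum_nonneg fun i _ => Real.rpow_nonneg (abs_nonneg (a i)) p) hmax
  · have hpr : p < q.toReal := (ENNReal.ofReal_lt_iff_lt_toReal hp0.le hq).mp hpq
    rw [if_neg hq]
    exact Real.sum_abs_rpow_rpow_one_div_le hp0 hpr.le hc hsum hmax

/-- the tail bound `‖a_tail(c)‖_q ≤ c^{-(1/p - 1/q)} ‖a‖_p` for all
`1 ≤ p < q ≤ ∞` and integers `0 < c < n` (with the convention `1/∞ = 0`;
note `1 / q.toReal = 0` when `q = ⊤` since `(⊤ : ℝ≥0∞).toReal = 0` and `1/0 = 0` in Lean). -/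
theorem stmt4 (n : ℕ) (a : Fin n → ℝ) (p : ℝ) (hp : 1 ≤ p) (q : ℝ≥0∞)
    (hpq : ENNReal.ofReal p < q) (c : ℕ) (hc0 : 0 < c) (hcn : c < n)
    (y : Fin n → ℝ) (hy : IsHead a c y) :
    lqNormE q (a - y) ≤ (c : ℝ) ^ (-(1 / p - 1 / q.toReal)) * lpNorm p a :=
  stmt4_general n a p hp q hpq c hc0 y hy
end

section
/- Let p, q ≥ 1 be reals, let 0 < ε < 1/2, ε₀ > 0, and s ≥ 0, and let A', B ∈ ℝ^{n×n} with A = A' + B. Assume: (i) ‖B‖_{S_p} < ε‖A'‖_{S_p}; (ii) ‖A'‖_{S_q} = ‖B‖_{S_q}; (iii) every B' ∈ ℝ^{n×n} with ‖B' − B‖_{S_q} ≤ 2ε₀‖B‖_{S_q} satisfies nnz(B') ≥ s. Then ‖A − A'‖_{S_p} < 2ε‖A‖_{S_p}, and every Ã ∈ ℝ^{n×n} with ‖A − Ã‖_{S_q} ≤ ε₀‖A‖_{S_q} satisfies nnz(Ã) ≥ s − nnz(A'). -/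
open scoped BigOperators ENNReal
open Matrix

/-!
The Schatten `p`-norm is subadditive for `p ≥ 1`; with that, both claims follow from the
triangle inequality and `nnz (X - Y) ≤ nnz X + nnz Y`. Subadditivity comes from a variational
bound. If `M x = ∑ⱼ σⱼ ⟪vⱼ, x⟫ uⱼ` with `(vⱼ)`, `(uⱼ)` orthonormal, then for any orthonormal
families `(eᵢ)`, `(fᵢ)` we have `|⟪fᵢ, M eᵢ⟫| ≤ ∑ⱼ wᵢⱼ σⱼ` with `wᵢⱼ = |⟪vⱼ, eᵢ⟫| |⟪uⱼ, fᵢ⟫|`.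
The matrix `w` has row and column sums at most `1` (Cauchy–Schwarz and Bessel), so Jensen's
inequality gives `∑ᵢ |⟪fᵢ, M eᵢ⟫| ^ p ≤ ∑ⱼ σⱼ ^ p`. For the singular vectors of `X + Y` the
left side equals `‖X + Y‖_p ^ p`, and Minkowski's inequality in `ℓ^p` splits it into the
corresponding sums for `X` and `Y`.
-/

open scoped RealInnerProductSpace

lemma rpow_sum_mul_le_sum_mul_rpow {ι : Type*} [Fintype ι] {p : ℝ} (hp : 1 ≤ p) {w x : ι → ℝ}
    (hw : ∀ i, 0 ≤ w i) (hw₁ : ∑ i, w i ≤ 1) (hx : ∀ i, 0 ≤ x i) :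
    (∑ i, w i * x i) ^ p ≤ ∑ i, w i * x i ^ p := by
  have hp₀ : 0 < p := zero_lt_one.trans_le hp
  have hw₀ : 0 ≤ ∑ i, w i := Finset.sum_nonneg fun i _ => hw i
  have hwx : 0 ≤ ∑ i, w i * x i ^ p :=
    Finset.sum_nonneg fun i _ => mul_nonneg (hw i) (Real.rpow_nonneg (hx i) p)
  calc (∑ i, w i * x i) ^ p
      ≤ ((∑ i, w i) ^ (1 - p⁻¹) * (∑ i, w i * x i ^ p) ^ p⁻¹) ^ p :=
        Real.rpow_le_rpow (Finset.sum_nonneg fun i _ => mul_nonneg (hw i) (hx i))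
          (Real.inner_le_weight_mul_Lp_of_nonneg _ hp w x hw hx) hp₀.le
    _ ≤ (1 * (∑ i, w i * x i ^ p) ^ p⁻¹) ^ p := by
        have hW : (∑ i, w i) ^ (1 - p⁻¹) ≤ 1 :=
          Real.rpow_le_one hw₀ hw₁ (sub_nonneg.2 (inv_le_one_of_one_le₀ hp))
        have := Real.rpow_nonneg hw₀ (1 - p⁻¹)
        have := Real.rpow_nonneg hwx p⁻¹
        gcongr
    _ = ∑ i, w i * x i ^ p := by
        rw [one_mul, ← Real.rpow_mul hwx, inv_mul_cancel₀ hp₀.ne', Real.rpow_one]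

lemma sum_subtype_ne_zero {ι R β : Type*} [Fintype ι] [Zero R] [DecidableEq R] [AddCommMonoid β]
    (σ : ι → R) {f : ι → β} (hf : ∀ i, σ i = 0 → f i = 0) : ∑ i : {i // σ i ≠ 0}, f i = ∑ i, f i := by
  rw [← Finset.sum_subtype (Finset.univ.filter fun i => σ i ≠ 0) (by simp) f]
  exact Finset.sum_filter_of_ne fun i _ hfi => mt (hf i) hfi

section Orthonormal

variable {E F : Type*} [NormedAddCommGroup E] [InnerProductSpace ℝ E]
  [NormedAddCommGroup F] [InnerProductSpace ℝ F]

lemma Orthonormal.sum_sq_abs_inner_le_one {J : Type*} [Fintype J] {v : J → E}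
    (hv : Orthonormal ℝ v) {x : E} (hx : ‖x‖ ≤ 1) : ∑ j, |⟪v j, x⟫| ^ 2 ≤ 1 := by
  simpa only [Real.norm_eq_abs] using
    (hv.sum_inner_products_le x (s := Finset.univ)).trans (pow_le_one₀ (norm_nonneg x) hx)

lemma Orthonormal.sum_abs_inner_mul_abs_inner_le_one {J : Type*} [Fintype J] {v : J → E}
    {u : J → F} (hv : Orthonormal ℝ v) (hu : Orthonormal ℝ u) {x : E} {y : F}
    (hx : ‖x‖ ≤ 1) (hy : ‖y‖ ≤ 1) :
    ∑ j, |⟪v j, x⟫| * |⟪u j, y⟫| ≤ 1 := by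
  refine (pow_le_one_iff_of_nonneg
    (Finset.sum_nonneg fun j _ => mul_nonneg (abs_nonneg _) (abs_nonneg _)) two_ne_zero).1 ?_
  calc (∑ j, |⟪v j, x⟫| * |⟪u j, y⟫|) ^ 2
      ≤ (∑ j, |⟪v j, x⟫| ^ 2) * ∑ j, |⟪u j, y⟫| ^ 2 := Finset.sum_mul_sq_le_sq_mul_sq _ _ _
    _ ≤ 1 := mul_le_one₀ (hv.sum_sq_abs_inner_le_one hx) (Finset.sum_nonneg fun j _ => sq_nonneg _)
          (hu.sum_sq_abs_inner_le_one hy)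

theorem sum_abs_inner_rpow_le_of_eq_sum {I J : Type*} [Fintype I] [Fintype J]
    (T : E →ₗ[ℝ] F) {σ : J → ℝ} {v : J → E} {u : J → F} (hσ : ∀ j, 0 ≤ σ j)
    (hv : Orthonormal ℝ v) (hu : Orthonormal ℝ u) (hT : ∀ x, T x = ∑ j, (σ j * ⟪v j, x⟫) • u j)
    {e : I → E} {f : I → F} (he : Orthonormal ℝ e) (hf : Orthonormal ℝ f) {p : ℝ} (hp : 1 ≤ p) :
    ∑ i, |⟪f i, T (e i)⟫| ^ p ≤ ∑ j, σ j ^ p := by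
  let w : I → J → ℝ := fun i j => |⟪v j, e i⟫| * |⟪u j, f i⟫|
  have hw : ∀ i j, 0 ≤ w i j := fun i j => mul_nonneg (abs_nonneg _) (abs_nonneg _)
  have hrow : ∀ i, ∑ j, w i j ≤ 1 := fun i =>
    hv.sum_abs_inner_mul_abs_inner_le_one hu (he.1 i).le (hf.1 i).le
  have hcol : ∀ j, ∑ i, w i j ≤ 1 := fun j => by
    simpa only [w, real_inner_comm (e _), real_inner_comm (f _)] using
      he.sum_abs_inner_mul_abs_inner_le_one hf (hv.1 j).le (hu.1 j).le
  have hentry : ∀ i, |⟪f i, T (e i)⟫| ≤ ∑ j, w i j * σ j := fun i => by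
    rw [hT, inner_sum]
    refine (Finset.abs_sum_le_sum_abs _ _).trans (Finset.sum_le_sum fun j _ => ?_)
    rw [real_inner_smul_right, abs_mul, abs_mul, abs_of_nonneg (hσ j), real_inner_comm (u j)]
    exact le_of_eq (by ring)
  calc ∑ i, |⟪f i, T (e i)⟫| ^ p
      ≤ ∑ i, (∑ j, w i j * σ j) ^ p := Finset.sum_le_sum fun i _ =>
        Real.rpow_le_rpow (abs_nonneg _) (hentry i) (zero_le_one.trans hp)
    _ ≤ ∑ i, ∑ j, w i j * σ j ^ p := Finset.sum_le_sum fun i _ =>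
        rpow_sum_mul_le_sum_mul_rpow hp (hw i) (hrow i) hσ
    _ = ∑ j, (∑ i, w i j) * σ j ^ p := by
        rw [Finset.sum_comm]; simp only [Finset.sum_mul]
    _ ≤ ∑ j, σ j ^ p := Finset.sum_le_sum fun j _ =>
        mul_le_of_le_one_left (Real.rpow_nonneg (hσ j) p) (hcol j)

end Orthonormal

section SingularVectors

variable {m n : Type*} [Fintype m] [Fintype n] [DecidableEq n] (M : Matrix m n ℝ)

noncomputable def rightSingVec (j : n) : EuclideanSpace ℝ n :=
  (isHermitian_conjTranspose_mul_self M).eigenvectorBasis j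

-- Junk value: `leftSingVec M j = 0` when `singVals M j = 0`, since `0⁻¹ = 0`; only the
-- vectors with nonzero singular value form an orthonormal family.
noncomputable def leftSingVec (j : n) : EuclideanSpace ℝ m :=
  (singVals M j)⁻¹ • toEuclideanLin M (rightSingVec M j)

lemma singVals_nonneg (j : n) : 0 ≤ singVals M j := Real.sqrt_nonneg _

lemma orthonormal_rightSingVec : Orthonormal ℝ (rightSingVec M) :=
  (isHermitian_conjTranspose_mul_self M).eigenvectorBasis.orthonormal

lemma inner_toEuclideanLin_rightSingVec (i j : n) :
    ⟪toEuclideanLin M (rightSingVec M i), toEuclideanLin M (rightSingVec M j)⟫ =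
      singVals M j ^ 2 * ⟪rightSingVec M i, rightSingVec M j⟫ := by
  have hH := isHermitian_conjTranspose_mul_self M
  have hgram : ∀ a b : EuclideanSpace ℝ n,
      ⟪toEuclideanLin M a, toEuclideanLin M b⟫ =
        ⟪a, toEuclideanLin (Mᴴ * M) b⟫ := fun a b => by
    simp only [EuclideanSpace.inner_eq_star_dotProduct, toLpLin_apply, star_trivial,
      ← mulVec_mulVec, conjTranspose_eq_transpose_of_trivial]
    rw [dotProduct_mulVec, ← mulVec_transpose]
  have heigen : toEuclideanLin (Mᴴ * M) (rightSingVec M j) =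
      hH.eigenvalues j • rightSingVec M j := by
    rw [rightSingVec, toLpLin_apply, hH.mulVec_eigenvectorBasis, WithLp.toLp_smul,
      WithLp.toLp_ofLp]
  rw [hgram, heigen, real_inner_smul_right, singVals,
    Real.sq_sqrt (eigenvalues_conjTranspose_mul_self_nonneg M j)]

lemma norm_toEuclideanLin_rightSingVec (j : n) :
    ‖toEuclideanLin M (rightSingVec M j)‖ = singVals M j := by
  have h := inner_toEuclideanLin_rightSingVec M j j
  rw [real_inner_self_eq_norm_sq, real_inner_self_eq_norm_sq,
    (orthonormal_rightSingVec M).1 j, one_pow, mul_one] at h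
  exact (sq_eq_sq₀ (norm_nonneg _) (singVals_nonneg M j)).1 h

lemma toEuclideanLin_rightSingVec (j : n) :
    toEuclideanLin M (rightSingVec M j) = singVals M j • leftSingVec M j := by
  by_cases h : singVals M j = 0
  · rw [h, zero_smul, ← norm_eq_zero, norm_toEuclideanLin_rightSingVec, h]
  · rw [leftSingVec, smul_inv_smul₀ h]

lemma inner_leftSingVec_toEuclideanLin_rightSingVec (j : n) :
    ⟪leftSingVec M j, toEuclideanLin M (rightSingVec M j)⟫ = singVals M j := by
  rw [leftSingVec, real_inner_smul_left, inner_toEuclideanLin_rightSingVec,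
    real_inner_self_eq_norm_sq, (orthonormal_rightSingVec M).1 j]
  by_cases h : singVals M j = 0
  · simp [h]
  · field_simp

lemma orthonormal_leftSingVec :
    Orthonormal ℝ fun j : {j // singVals M j ≠ 0} => leftSingVec M j := by
  rw [orthonormal_iff_ite]
  intro i j
  rw [leftSingVec, leftSingVec, real_inner_smul_left, real_inner_smul_right,
    inner_toEuclideanLin_rightSingVec, orthonormal_iff_ite.1 (orthonormal_rightSingVec M)]
  by_cases h : i = j
  · subst h
    have hi := i.2
    simp only [if_true]
    field_simp
  · simp [h, Subtype.coe_ne_coe.2 h]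

lemma toEuclideanLin_eq_sum (x : EuclideanSpace ℝ n) :
    toEuclideanLin M x =
      ∑ j : {j // singVals M j ≠ 0}, (singVals M j * ⟪rightSingVec M j, x⟫) • leftSingVec M j := by
  conv_lhs => rw [← (isHermitian_conjTranspose_mul_self M).eigenvectorBasis.sum_repr' x]
  rw [map_sum, sum_subtype_ne_zero (singVals M)
    (f := fun j => (singVals M j * ⟪rightSingVec M j, x⟫) • leftSingVec M j) fun j hj => by simp [hj]]
  refine Finset.sum_congr rfl fun j _ => ?_
  rw [map_smul, ← rightSingVec, toEuclideanLin_rightSingVec, smul_smul, mul_comm]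

theorem sum_abs_inner_toEuclideanLin_rpow_le {I : Type*} [Fintype I]
    {e : I → EuclideanSpace ℝ n} {f : I → EuclideanSpace ℝ m}
    (he : Orthonormal ℝ e) (hf : Orthonormal ℝ f) {p : ℝ} (hp : 1 ≤ p) :
    ∑ i, |⟪f i, toEuclideanLin M (e i)⟫| ^ p ≤ ∑ j, singVals M j ^ p := by
  have hp₀ : p ≠ 0 := (zero_lt_one.trans_le hp).ne'
  rw [← sum_subtype_ne_zero (singVals M) (f := fun j => singVals M j ^ p)
    fun j hj => by simp [hj, Real.zero_rpow hp₀]]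
  exact sum_abs_inner_rpow_le_of_eq_sum _ (σ := fun j : {j // singVals M j ≠ 0} => singVals M j)
    (fun j => singVals_nonneg M j)
    ((orthonormal_rightSingVec M).comp _ Subtype.val_injective) (orthonormal_leftSingVec M)
    (toEuclideanLin_eq_sum M) he hf hp

end SingularVectors

section SchattenNorm

variable {m n : Type*} [Fintype m] [Fintype n] [DecidableEq n]

lemma schattenF_nonneg (p : ℝ) (M : Matrix m n ℝ) : 0 ≤ schattenF p M :=
  Real.rpow_nonneg (Finset.sum_nonneg fun j _ => Real.rpow_nonneg (singVals_nonneg M j) p) _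

lemma schattenF_neg (p : ℝ) (M : Matrix m n ℝ) : schattenF p (-M) = schattenF p M := by
  simp [schattenF, singVals]

theorem schattenF_add_le {p : ℝ} (hp : 1 ≤ p) (X Y : Matrix m n ℝ) :
    schattenF p (X + Y) ≤ schattenF p X + schattenF p Y := by
  have hp₀ : 0 < p := zero_lt_one.trans_le hp
  let e : {j // singVals (X + Y) j ≠ 0} → EuclideanSpace ℝ n := fun j => rightSingVec (X + Y) j
  let f : {j // singVals (X + Y) j ≠ 0} → EuclideanSpace ℝ m := fun j => leftSingVec (X + Y) j
  have he : Orthonormal ℝ e := (orthonormal_rightSingVec _).comp _ Subtype.val_injective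
  have hf : Orthonormal ℝ f := orthonormal_leftSingVec _
  have hsum : ∑ j, singVals (X + Y) j ^ p =
      ∑ j, |⟪f j, toEuclideanLin X (e j)⟫ + ⟪f j, toEuclideanLin Y (e j)⟫| ^ p := by
    rw [← sum_subtype_ne_zero (singVals (X + Y)) (f := fun j => singVals (X + Y) j ^ p)
      fun j hj => by simp [hj, Real.zero_rpow hp₀.ne']]
    refine Finset.sum_congr rfl fun j _ => ?_
    rw [← inner_add_right, ← LinearMap.add_apply, ← map_add,
      inner_leftSingVec_toEuclideanLin_rightSingVec, abs_of_nonneg (singVals_nonneg _ _)]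
  calc schattenF p (X + Y)
      = (∑ j, |⟪f j, toEuclideanLin X (e j)⟫ + ⟪f j, toEuclideanLin Y (e j)⟫| ^ p)
          ^ (1 / p) := by rw [schattenF, hsum]
    _ ≤ (∑ j, |⟪f j, toEuclideanLin X (e j)⟫| ^ p) ^ (1 / p)
          + (∑ j, |⟪f j, toEuclideanLin Y (e j)⟫| ^ p) ^ (1 / p) :=
        Real.Lp_add_le _ _ _ hp
    _ ≤ schattenF p X + schattenF p Y := by
        unfold schattenF
        gcongr <;> exact sum_abs_inner_toEuclideanLin_rpow_le _ he hf hp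

end SchattenNorm

lemma nnz_sub_le {m n : Type*} [Fintype m] [Fintype n] (X Y : Matrix m n ℝ) :
    nnz (X - Y) ≤ nnz X + nnz Y := by
  classical
  unfold nnz
  refine (Finset.card_le_card fun ij hij => ?_).trans (Finset.card_union_le _ _)
  rw [Finset.mem_filter, Matrix.sub_apply] at hij
  simp only [Finset.mem_union, Finset.mem_filter, Finset.mem_univ, true_and]
  by_contra! h
  exact hij.2 (by rw [h.1, h.2, sub_zero])

theorem stmt5_general (p q : ℝ) (hp : 1 ≤ p) (hq : 1 ≤ q) (ε ε₀ s : ℝ)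
    (hε0 : 0 < ε) (hε : ε < 1 / 2) (hε₀ : 0 < ε₀)
    (n : ℕ) (A A' B : Matrix (Fin n) (Fin n) ℝ) (hA : A = A' + B)
    (h1 : schattenF p B < ε * schattenF p A')
    (h2 : schattenF q A' = schattenF q B)
    (h3 : ∀ B' : Matrix (Fin n) (Fin n) ℝ,
      schattenF q (B' - B) ≤ 2 * ε₀ * schattenF q B → s ≤ (nnz B' : ℝ)) :
    schattenF p (A - A') < 2 * ε * schattenF p A ∧
    ∀ At : Matrix (Fin n) (Fin n) ℝ,
      schattenF q (A - At) ≤ ε₀ * schattenF q A → s - (nnz A' : ℝ) ≤ (nnz At : ℝ) := by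
  have hA' : schattenF p A' ≤ schattenF p A + schattenF p B := by
    have h := schattenF_add_le hp A (-B)
    rwa [schattenF_neg, show A + -B = A' by rw [hA, add_neg_cancel_right]] at h
  have hAq : schattenF q A ≤ 2 * schattenF q B := by
    have h := schattenF_add_le hq A' B
    rw [← hA, h2] at h
    linarith
  refine ⟨?_, fun At hAt => ?_⟩
  · rw [show A - A' = B by rw [hA, add_sub_cancel_left]]
    linarith [mul_le_mul_of_nonneg_left hA' hε0.le,
      mul_nonneg (sub_nonneg.2 hε.le) (schattenF_nonneg p B)]
  · have hclose : schattenF q (At - A' - B) ≤ 2 * ε₀ * schattenF q B := by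
      rw [show At - A' - B = -(A - At) by rw [hA]; abel, schattenF_neg]
      linarith [mul_le_mul_of_nonneg_left hAq hε₀.le]
    have hnnz : (nnz (At - A') : ℝ) ≤ nnz At + nnz A' := by exact_mod_cast nnz_sub_le At A'
    linarith [h3 _ hclose]

/-- the reduction lemma combining properties (P1)-(P4), for `p, q ≥ 1`. -/
theorem stmt5 (p q : ℝ) (hp : 1 ≤ p) (hq : 1 ≤ q) (ε ε₀ s : ℝ)
    (hε0 : 0 < ε) (hε : ε < 1 / 2) (hε₀ : 0 < ε₀) (hs : 0 ≤ s)
    (n : ℕ) (A A' B : Matrix (Fin n) (Fin n) ℝ) (hA : A = A' + B)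
    (h1 : schattenF p B < ε * schattenF p A')
    (h2 : schattenF q A' = schattenF q B)
    (h3 : ∀ B' : Matrix (Fin n) (Fin n) ℝ,
      schattenF q (B' - B) ≤ 2 * ε₀ * schattenF q B → s ≤ (nnz B' : ℝ)) :
    schattenF p (A - A') < 2 * ε * schattenF p A ∧
    ∀ At : Matrix (Fin n) (Fin n) ℝ,
      schattenF q (A - At) ≤ ε₀ * schattenF q A → s - (nnz A' : ℝ) ≤ (nnz At : ℝ) :=
  stmt5_general p q hp hq ε ε₀ s hε0 hε hε₀ n A A' B hA h1 h2 h3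
end

section
/- For every real q ≥ 2, every matrix A ∈ ℝ^{n×d}, and every collection U₁, …, U_k of pairwise disjoint subsets of {1, …, d}: ‖A‖_{S_q}^q ≥ Σ_{i=1}^k ‖A^{(Uᵢ)}‖_{S_∞}^q, where A^{(Uᵢ)} denotes the submatrix of A consisting of the columns indexed by Uᵢ. -/
open scoped BigOperators ENNReal
open Matrix

open scoped RealInnerProductSpace

/-! Put `M = Aᴴ A`, so that `‖A‖_{S_q}^q = ∑ⱼ λⱼ(M)^{q/2}`. For each nonempty `Uᵢ`, a top
eigenvector of the Gram matrix of the column block `A^{(Uᵢ)}`, extended by zero, is a unit vector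
`wᵢ` supported on `Uᵢ` with `⟪wᵢ, M wᵢ⟫ = ‖A^{(Uᵢ)}‖_{S_∞}^2`, and disjoint supports make the `wᵢ`
orthonormal. In an eigenbasis `(bⱼ)` of `M`, `⟪wᵢ, M wᵢ⟫ = ∑ⱼ ⟪bⱼ, wᵢ⟫² λⱼ`, where the weights
`⟪bⱼ, wᵢ⟫²` have row sums `1` (Parseval) and column sums `≤ 1` (Bessel). Jensen's inequality for
the convex map `t ↦ t^{q/2}` (this is where `q ≥ 2` enters) then gives
`∑ᵢ ⟪wᵢ, M wᵢ⟫^{q/2} ≤ ∑ⱼ λⱼ^{q/2}`. -/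

theorem sum_rpow_sum_mul_le_sum_rpow {ι κ : Type*} [Fintype ι] [Fintype κ]
    {c : ι → κ → ℝ} {x : κ → ℝ} {p : ℝ} (hp : 1 ≤ p) (hc : ∀ i j, 0 ≤ c i j)
    (hrow : ∀ i, ∑ j, c i j = 1) (hcol : ∀ j, ∑ i, c i j ≤ 1) (hx : ∀ j, 0 ≤ x j) :
    ∑ i, (∑ j, c i j * x j) ^ p ≤ ∑ j, x j ^ p :=
  calc ∑ i, (∑ j, c i j * x j) ^ p ≤ ∑ i, ∑ j, c i j * x j ^ p :=
        Finset.sum_le_sum fun i _ => Real.rpow_arith_mean_le_arith_mean_rpow _ _ _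
          (fun j _ => hc i j) (hrow i) (fun j _ => hx j) hp
    _ = ∑ j, (∑ i, c i j) * x j ^ p := by
        rw [Finset.sum_comm]
        simp_rw [Finset.sum_mul]
    _ ≤ ∑ j, x j ^ p := Finset.sum_le_sum fun j _ =>
        mul_le_of_le_one_left (Real.rpow_nonneg (hx j) p) (hcol j)

theorem EuclideanSpace.real_inner_eq_dotProduct {n : Type*} [Fintype n]
    (x y : EuclideanSpace ℝ n) : ⟪x, y⟫ = x ⬝ᵥ y := by
  simp [EuclideanSpace.inner_eq_star_dotProduct, dotProduct_comm]

namespace Matrix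

variable {n : Type*} [Fintype n] [DecidableEq n] {M : Matrix n n ℝ}

theorem IsHermitian.dotProduct_mulVec_eq_sum_eigenvalues (hM : M.IsHermitian)
    (x : EuclideanSpace ℝ n) :
    x ⬝ᵥ M *ᵥ x = ∑ j, ⟪hM.eigenvectorBasis j, x⟫ ^ 2 * hM.eigenvalues j := by
  have hMx : M *ᵥ x = ∑ j, (⟪hM.eigenvectorBasis j, x⟫ * hM.eigenvalues j) •
      ⇑(hM.eigenvectorBasis j) := by
    conv_lhs => rw [← hM.eigenvectorBasis.sum_repr' x]
    simp [mulVec_sum, mulVec_smul, hM.mulVec_eigenvectorBasis, smul_smul]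
  rw [hMx, dotProduct_sum]
  refine Finset.sum_congr rfl fun j _ => ?_
  rw [dotProduct_smul, smul_eq_mul, ← EuclideanSpace.real_inner_eq_dotProduct, real_inner_comm]
  ring

theorem PosSemidef.sum_rpow_dotProduct_mulVec_le (hM : M.PosSemidef) {ι : Type*} [Fintype ι]
    {v : ι → EuclideanSpace ℝ n} (hv : Orthonormal ℝ v) {p : ℝ} (hp : 1 ≤ p) :
    ∑ i, (v i ⬝ᵥ M *ᵥ v i) ^ p ≤ ∑ j, hM.1.eigenvalues j ^ p := by
  simp_rw [hM.1.dotProduct_mulVec_eq_sum_eigenvalues]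
  refine sum_rpow_sum_mul_le_sum_rpow hp (fun _ _ => sq_nonneg _) (fun i => ?_) (fun j => ?_)
    hM.eigenvalues_nonneg
  · rw [OrthonormalBasis.sum_sq_inner_right, hv.1 i, one_pow]
  · have hbessel := hv.sum_inner_products_le (hM.1.eigenvectorBasis j) (s := Finset.univ)
    simpa [Real.norm_eq_abs, sq_abs, real_inner_comm,
      hM.1.eigenvectorBasis.orthonormal.1 j] using hbessel

end Matrix

theorem orthonormal_of_disjoint_support {ι n : Type*} [Fintype n] {v : ι → EuclideanSpace ℝ n}
    {U : ι → Set n} (hU : Pairwise fun i j => Disjoint (U i) (U j))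
    (hsupp : ∀ i, Function.support ⇑(v i) ⊆ U i) (hv : ∀ i, ‖v i‖ = 1) : Orthonormal ℝ v := by
  refine ⟨hv, fun i j hij => ?_⟩
  show ⟪v i, v j⟫ = 0
  rw [EuclideanSpace.real_inner_eq_dotProduct]
  refine Finset.sum_eq_zero fun a _ => ?_
  by_contra h
  obtain ⟨hi, hj⟩ := mul_ne_zero_iff.mp h
  exact Set.disjoint_left.mp (hU hij) (hsupp i hi) (hsupp j hj)

section ExtendByZero

variable {m n : Type*} [Fintype m] [Fintype n] {e : m → n}

theorem sum_extend_zero_mul {R : Type*} [NonUnitalNonAssocSemiring R]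
    (he : Function.Injective e) (u : m → R) (f : n → R) :
    ∑ a, Function.extend e u 0 a * f a = ∑ x, u x * f (e x) :=
  (Fintype.sum_of_injective e he _ _
    (fun a ha => by rw [Function.extend_apply' _ _ _ (by simpa using ha), Pi.zero_apply, zero_mul])
    (fun x => by rw [he.extend_apply])).symm

theorem dotProduct_mulVec_extend_zero {R : Type*} [CommSemiring R] (he : Function.Injective e)
    (u : m → R) (M : Matrix n n R) :
    Function.extend e u 0 ⬝ᵥ M *ᵥ Function.extend e u 0 = u ⬝ᵥ M.submatrix e e *ᵥ u := by
  simp only [dotProduct, mulVec, submatrix_apply, mul_comm (M _ _), sum_extend_zero_mul he]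

theorem norm_toLp_extend_zero (he : Function.Injective e) (u : EuclideanSpace ℝ m) :
    ‖WithLp.toLp 2 (Function.extend e ⇑u 0)‖ = ‖u‖ := by
  refine (sq_eq_sq₀ (norm_nonneg _) (norm_nonneg _)).mp ?_
  simp only [← real_inner_self_eq_norm_sq, EuclideanSpace.real_inner_eq_dotProduct, dotProduct,
    sum_extend_zero_mul he, he.extend_apply]

end ExtendByZero

section SingularValues

variable {m n : Type*} [Fintype m] [Fintype n] [DecidableEq n]

theorem specNorm_nonneg (B : Matrix m n ℝ) : 0 ≤ specNorm B :=
  Real.iSup_nonneg fun _ => Real.sqrt_nonneg _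

theorem exists_dotProduct_mulVec_eq_specNorm_sq [Nonempty n] (B : Matrix m n ℝ) :
    ∃ u : EuclideanSpace ℝ n, ‖u‖ = 1 ∧ u ⬝ᵥ (Bᴴ * B) *ᵥ u = specNorm B ^ 2 := by
  have hB := isHermitian_conjTranspose_mul_self B
  obtain ⟨j, hj⟩ := exists_eq_ciSup_of_finite (f := singVals B)
  have hu := hB.eigenvectorBasis.orthonormal.1 j
  refine ⟨hB.eigenvectorBasis j, hu, ?_⟩
  rw [specNorm, ← hj, singVals,
    Real.sq_sqrt ((posSemidef_conjTranspose_mul_self B).eigenvalues_nonneg j),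
    hB.mulVec_eigenvectorBasis, dotProduct_smul, ← EuclideanSpace.real_inner_eq_dotProduct,
    real_inner_self_eq_norm_sq, hu, one_pow, smul_eq_mul, mul_one]

theorem exists_support_subset_dotProduct_mulVec_eq_specNorm_sq (A : Matrix m n ℝ)
    {S : Finset n} (hS : S.Nonempty) :
    ∃ w : EuclideanSpace ℝ n, Function.support ⇑w ⊆ S ∧ ‖w‖ = 1 ∧
      w ⬝ᵥ (Aᴴ * A) *ᵥ w = specNorm (A.submatrix id ((↑) : S → n)) ^ 2 := by
  have := hS.to_subtype
  obtain ⟨u, hu, hquad⟩ := exists_dotProduct_mulVec_eq_specNorm_sq (A.submatrix id ((↑) : S → n))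
  refine ⟨WithLp.toLp 2 (Function.extend Subtype.val ⇑u 0), ?_,
    (norm_toLp_extend_zero Subtype.val_injective u).trans hu, ?_⟩
  · refine Function.support_extend_zero_subset.trans ?_
    simp
  · rw [dotProduct_mulVec_extend_zero Subtype.val_injective, ← hquad, conjTranspose_submatrix,
      ← submatrix_mul _ _ _ _ _ Function.bijective_id]

theorem schattenF_rpow_eq_sum_eigenvalues_rpow (A : Matrix m n ℝ) {p : ℝ} (hp : 0 < p) :
    schattenF p A ^ p = ∑ j, (isHermitian_conjTranspose_mul_self A).eigenvalues j ^ (p / 2) := by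
  rw [schattenF, ← Real.rpow_mul (Finset.sum_nonneg fun j _ => by unfold singVals; positivity),
    one_div_mul_cancel hp.ne', Real.rpow_one]
  refine Finset.sum_congr rfl fun j _ => ?_
  rw [singVals, Real.sqrt_eq_rpow,
    ← Real.rpow_mul ((posSemidef_conjTranspose_mul_self A).eigenvalues_nonneg j)]
  ring_nf

end SingularValues

/-- pinching-type inequality: for `q ≥ 2` and pairwise disjoint column sets
`U₁, …, U_k`, we have `‖A‖_{S_q}^q ≥ Σᵢ ‖A^{(Uᵢ)}‖_{S_∞}^q`. -/
theorem stmt8 (q : ℝ) (hq : 2 ≤ q) (n d k : ℕ) (A : Matrix (Fin n) (Fin d) ℝ)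
    (U : Fin k → Finset (Fin d)) (hU : ∀ i j, i ≠ j → Disjoint (U i) (U j)) :
    ∑ i : Fin k,
        (specNorm (A.submatrix id (fun j : (U i : Finset (Fin d)) => (j : Fin d)))) ^ q
      ≤ schattenF q A ^ q := by
  classical
  have hq0 : 0 < q := by linarith
  have hempty (i : {i // ¬(U i).Nonempty}) :
      specNorm (A.submatrix id (fun j : (U i : Finset (Fin d)) => (j : Fin d))) ^ q = 0 := by
    have : IsEmpty (U i) := Finset.isEmpty_coe_sort.mpr (Finset.not_nonempty_iff_eq_empty.mp i.2)
    rw [specNorm, Real.iSup_of_isEmpty, Real.zero_rpow hq0.ne']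
  choose w hsupp hnorm hquad using fun i : {i // (U i).Nonempty} =>
    exists_support_subset_dotProduct_mulVec_eq_specNorm_sq A i.2
  have hw : Orthonormal ℝ w := orthonormal_of_disjoint_support
    (fun i j hij => Finset.disjoint_coe.mpr (hU i j (Subtype.coe_ne_coe.mpr hij))) hsupp hnorm
  rw [← Fintype.sum_subtype_add_sum_subtype (fun i => (U i).Nonempty),
    Fintype.sum_eq_zero _ hempty, add_zero, schattenF_rpow_eq_sum_eigenvalues_rpow A hq0]
  calc _ = ∑ i, (w i ⬝ᵥ (Aᴴ * A) *ᵥ w i) ^ (q / 2) := Finset.sum_congr rfl fun i _ => by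
          rw [hquad, ← Real.rpow_natCast, ← Real.rpow_mul (specNorm_nonneg _)]
          congr 1
          ring
    _ ≤ _ := (posSemidef_conjTranspose_mul_self A).sum_rpow_dotProduct_mulVec_le hw (by linarith)
end
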